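/- Let $m$ be prime and for each $k \ge 1$ let $R_k = \operatorname{diag}[p_{k,1},\dots,p_{k,n}]$ be expanding integer diagonal matrices and $D_k \subset \mathbb{Z}^n$ digit sets with $\#D_k = m$ whose mask-polynomial zero sets satisfy $\mathcal{Z}(m_{D_k}) = \bigcup_{i=1}^{\phi(k)}\bigcup_{j=1}^{m-1}\left(\frac{j}{m}\nu_{k,i}+\mathbb{Z}^n\right)$ with all coordinates of each $\nu_{k,i}$ in $[1,m-1]$. If the Moran measure $\mu = \delta_{R_1^{-1}D_1} * \delta_{(R_2R_1)^{-1}D_2} * \cdots$ admits an infinite orthogonal set of exponentials in $L^2(\mu)$, then for each coordinate $j \in \{1,\dots,n\}$, infinitely many of the integers $p_{k,j}$ are divisible by $m$. -/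

import Mathlib

open MeasureTheory

/-!
If only finitely many `p_{k,t}` were divisible by the prime `m`, the `m`-adic valuation of the
partial products `p_{1,t} ⋯ p_{k,t}` would stay below some `N`. For `a ≠ b` in `Λ` we have
`a_t - b_t = p_{1,t} ⋯ p_{k,t} (j ν_t / m + z_t)` with `m ∤ j ν_t`, so `m (a_t - b_t)` is an
integer not divisible by `m ^ N`. Among infinitely many points two have `m a_t` congruent
modulo `m ^ N`, a contradiction.
-/

/-- The canonical embedding `ℤⁿ → ℝⁿ`. -/
noncomputable def ιv {n : ℕ} (z : Fin n → ℤ) : EuclideanSpace ℝ (Fin n) :=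
  WithLp.toLp 2 (fun t => (z t : ℝ))

theorem Prime.exists_forall_not_pow_dvd_prod {α ι : Type*} [CommMonoidWithZero α]
    [IsCancelMulZero α] [WfDvdMonoid α] {q : α} (hq : Prime q) {f : ι → α} {A : Set ι}
    (hfin : {l | l ∈ A ∧ q ∣ f l}.Finite) (hf : ∀ l ∈ A, f l ≠ 0) :
    ∃ N, ∀ s : Finset ι, ↑s ⊆ A → ¬ q ^ N ∣ ∏ l ∈ s, f l := by
  classical
  have := nontrivial_of_ne q 0 hq.ne_zero
  have hP : ∏ l ∈ hfin.toFinset, f l ≠ 0 :=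
    Finset.prod_ne_zero_iff.mpr fun l hl => hf l ((hfin.mem_toFinset.mp hl).1)
  obtain ⟨N, hN⟩ := FiniteMultiplicity.of_prime_left hq hP
  refine ⟨N + 1, fun s hs hdvd => hN ?_⟩
  rw [← Finset.prod_filter_mul_prod_filter_not s (fun l => q ∣ f l)] at hdvd
  have hcoprime : ¬ q ∣ ∏ l ∈ s.filter (fun l => ¬ q ∣ f l), f l := by
    rw [hq.dvd_finsetProd_iff]
    rintro ⟨l, hl, hdvd⟩
    exact (Finset.mem_filter.mp hl).2 hdvd
  refine (hq.pow_dvd_of_dvd_mul_right _ hcoprime hdvd).trans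
    (Finset.prod_dvd_prod_of_subset _ _ _ fun l hl => ?_)
  obtain ⟨hls, hlq⟩ := Finset.mem_filter.mp hl
  exact hfin.mem_toFinset.mpr ⟨hs hls, hlq⟩

theorem Set.finite_of_forall_sub_eq_intCast_not_dvd {X : Type*} {Λ : Set X} (g : X → ℝ)
    {N : ℕ} (hN : N ≠ 0)
    (h : ∀ a ∈ Λ, ∀ b ∈ Λ, a ≠ b → ∃ c : ℤ, g a - g b = c ∧ ¬ (N : ℤ) ∣ c) : Λ.Finite := by
  by_contra hinf
  obtain ⟨a₀, ha₀⟩ := Set.Infinite.nonempty hinf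
  have hfloor : ∀ a ∈ Λ, (⌊g a - g a₀⌋ : ℝ) = g a - g a₀ := by
    intro a ha
    obtain rfl | hne := eq_or_ne a a₀
    · simp
    · obtain ⟨c, hc, -⟩ := h a ha a₀ ha₀ hne
      rw [hc, Int.floor_intCast]
  have : NeZero N := ⟨hN⟩
  obtain ⟨a, ha, b, hb, hab, hmod⟩ := Set.Infinite.exists_ne_map_eq_of_mapsTo hinf
    (Set.mapsTo_univ (fun a => ((⌊g a - g a₀⌋ : ℤ) : ZMod N)) Λ) Set.finite_univ
  obtain ⟨c, hc, hndvd⟩ := h a ha b hb hab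
  have hc' : ⌊g a - g a₀⌋ - ⌊g b - g a₀⌋ = c := by
    exact_mod_cast (by push_cast; rw [hfloor a ha, hfloor b hb, ← hc]; ring :
      ((⌊g a - g a₀⌋ - ⌊g b - g a₀⌋ : ℤ) : ℝ) = c)
  refine hndvd ((ZMod.intCast_zmod_eq_zero_iff_dvd c N).mp ?_)
  rw [← hc', Int.cast_sub, sub_eq_zero]
  exact hmod

theorem Nat.Prime.not_intCast_dvd_mul_add_mul {m : ℕ} (hm : m.Prime) {j : ℕ} {v : ℤ}
    (hj : j ∈ Finset.Icc 1 (m - 1)) (hv : 1 ≤ v ∧ v ≤ (m : ℤ) - 1) (z : ℤ) :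
    ¬ (m : ℤ) ∣ j * v + m * z := by
  rw [dvd_add_left (dvd_mul_right (m : ℤ) z)]
  obtain ⟨hj₁, hj₂⟩ := Finset.mem_Icc.mp hj
  intro hdvd
  rcases (Nat.prime_iff_prime_int.mp hm).dvd_mul.mp hdvd with hmj | hmv
  · have := Nat.le_of_dvd (by omega) (Int.ofNat_dvd.mp hmj)
    omega
  · have := Int.le_of_dvd (by omega) hmv
    omega

theorem stmt19_general {n : ℕ} (m : ℕ) (hm : m.Prime)
    (p : ℕ → Fin n → ℤ) (hexp : ∀ k, 1 ≤ k → ∀ t, 1 < |p k t|)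
    (D : ℕ → Finset (Fin n → ℤ))
    (φ : ℕ → ℕ) (ν : ℕ → ℕ → (Fin n → ℤ))
    (hν : ∀ k, 1 ≤ k → ∀ i ∈ Finset.Icc 1 (φ k), ∀ t, 1 ≤ ν k i t ∧ ν k i t ≤ (m : ℤ) - 1)
    (hZ : ∀ k, 1 ≤ k →
      {ξ : EuclideanSpace ℝ (Fin n) | ∑ d ∈ D k,
          Complex.exp (2 * (Real.pi : ℂ) * Complex.I * ((inner ℝ ξ (ιv d) : ℝ) : ℂ)) = 0}
        = {ξ : EuclideanSpace ℝ (Fin n) | ∃ i ∈ Finset.Icc 1 (φ k),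
            ∃ j ∈ Finset.Icc 1 (m - 1), ∃ z : Fin n → ℤ,
              ξ = (WithLp.toLp 2 (fun t => (j : ℝ) / m * ν k i t + z t) : EuclideanSpace ℝ (Fin n))})
    (Λ : Set (EuclideanSpace ℝ (Fin n))) (hinf : Λ.Infinite)
    (horth : ∀ a ∈ Λ, ∀ b ∈ Λ, a ≠ b → ∃ k, 1 ≤ k ∧ ∃ ξ : EuclideanSpace ℝ (Fin n),
        (∑ d ∈ D k,
            Complex.exp (2 * (Real.pi : ℂ) * Complex.I * ((inner ℝ ξ (ιv d) : ℝ) : ℂ)) = 0) ∧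
        a - b = (WithLp.toLp 2 (fun t => (∏ j ∈ Finset.Icc 1 k, (p j t : ℝ)) * ξ t) :
          EuclideanSpace ℝ (Fin n))) :
    ∀ t : Fin n, {k : ℕ | 1 ≤ k ∧ (m : ℤ) ∣ p k t}.Infinite := by
  intro t hfin
  have hmZ : Prime (m : ℤ) := Nat.prime_iff_prime_int.mp hm
  obtain ⟨N, hN⟩ := hmZ.exists_forall_not_pow_dvd_prod (A := Set.Ici 1) hfin
    fun k hk h0 => by simpa [h0] using hexp k hk t
  refine hinf (Set.finite_of_forall_sub_eq_intCast_not_dvd (fun a => m * a t)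
    (pow_ne_zero N hm.ne_zero) fun a ha b hb hab => ?_)
  obtain ⟨k, hk, ξ, hξ, hdiff⟩ := horth a ha b hb hab
  obtain ⟨i, hi, j, hj, z, rfl⟩ := (hZ k hk).subset hξ
  have hdiff_t := congrArg (· t) hdiff
  refine ⟨(∏ l ∈ Finset.Icc 1 k, p l t) * (j * ν k i t + m * z t), ?_, fun hdvd => ?_⟩
  · simp only [PiLp.sub_apply] at hdiff_t
    rw [← mul_sub, hdiff_t]
    have hm0 : (m : ℝ) ≠ 0 := Nat.cast_ne_zero.mpr hm.ne_zero
    push_cast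
    field_simp
  · refine hN (Finset.Icc 1 k) (fun l hl => (Finset.mem_Icc.mp hl).1) ?_
    push_cast at hdvd
    exact hmZ.pow_dvd_of_dvd_mul_right _
      (hm.not_intCast_dvd_mul_add_mul hj (hν k hk i hi t) _) hdvd

/-- For a Moran measure generated by expanding diagonal matrices
`R_k = diag[p_{k,1},…,p_{k,n}]` and Sierpinski-type digit sets `D_k` of prime cardinality
`m` (so that `Z(μ̂) = ⋃_k R₁⋯R_k Z(m_{D_k})`), if `L²(μ)` admits an infinite orthogonal set
of exponentials, then for each coordinate `j` infinitely many `p_{k,j}` are divisible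
by `m`. -/
theorem stmt19 {n : ℕ} (m : ℕ) (hm : m.Prime)
    (p : ℕ → Fin n → ℤ) (hexp : ∀ k, 1 ≤ k → ∀ t, 1 < |p k t|)
    (D : ℕ → Finset (Fin n → ℤ)) (hcard : ∀ k, 1 ≤ k → (D k).card = m)
    (φ : ℕ → ℕ) (ν : ℕ → ℕ → (Fin n → ℤ))
    (hν : ∀ k, 1 ≤ k → ∀ i ∈ Finset.Icc 1 (φ k), ∀ t, 1 ≤ ν k i t ∧ ν k i t ≤ (m : ℤ) - 1)
    (hZ : ∀ k, 1 ≤ k →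
      {ξ : EuclideanSpace ℝ (Fin n) | ∑ d ∈ D k,
          Complex.exp (2 * (Real.pi : ℂ) * Complex.I * ((inner ℝ ξ (ιv d) : ℝ) : ℂ)) = 0}
        = {ξ : EuclideanSpace ℝ (Fin n) | ∃ i ∈ Finset.Icc 1 (φ k),
            ∃ j ∈ Finset.Icc 1 (m - 1), ∃ z : Fin n → ℤ,
              ξ = (WithLp.toLp 2 (fun t => (j : ℝ) / m * ν k i t + z t) : EuclideanSpace ℝ (Fin n))})
    (Λ : Set (EuclideanSpace ℝ (Fin n))) (hinf : Λ.Infinite)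
    (horth : ∀ a ∈ Λ, ∀ b ∈ Λ, a ≠ b → ∃ k, 1 ≤ k ∧ ∃ ξ : EuclideanSpace ℝ (Fin n),
        (∑ d ∈ D k,
            Complex.exp (2 * (Real.pi : ℂ) * Complex.I * ((inner ℝ ξ (ιv d) : ℝ) : ℂ)) = 0) ∧
        a - b = (WithLp.toLp 2 (fun t => (∏ j ∈ Finset.Icc 1 k, (p j t : ℝ)) * ξ t) :
          EuclideanSpace ℝ (Fin n))) :
    ∀ t : Fin n, {k : ℕ | 1 ≤ k ∧ (m : ℤ) ∣ p k t}.Infinite :=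
  stmt19_general m hm p hexp D φ ν hν hZ Λ hinf horth
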